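/- arXiv:2009.06677 — 2 statements merged into one kernel-verified Lean document; each statement's English description precedes it below -/
import Mathlib

section
/- Let μ̂ > 0 with μ̂ ∉ Spec(T)\Λ, and let φ̂ ∈ V. Then ‖(I−S)φ̂‖ ≤ C(μ̂,Λ) · ‖φ̂ − μ̂ T⁻¹ φ̂‖, where ‖·‖ is the norm of the ambient inner product. -/
/-!
In an orthonormal eigenbasis of `T` both sides decouple. Against an eigenvector of eigenvalue
`ξ`, the coordinate of `(I - S)φ` vanishes if `ξ ∈ Λ` (then the eigenvector lies in `E(Λ)`) and
equals that of `φ` otherwise (then the eigenspace is orthogonal to `E(Λ)`), while the coordinate of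
`φ - μ T⁻¹ φ` is `(ξ - μ) / ξ` times that of `φ`. So each coordinate of `(I - S)φ` is at most
`ξ / |ξ - μ| ≤ C(μ, Λ)` times the matching coordinate of `φ - μ T⁻¹ φ`, and Parseval's identity
sums these bounds.
-/

open scoped RealInnerProductSpace

noncomputable section

variable {V : Type*} [NormedAddCommGroup V] [InnerProductSpace ℝ V]

/-- `Spec(T)`: the set of eigenvalues of `T`. -/
def specSet (T : V →ₗ[ℝ] V) : Set ℝ := {μ : ℝ | Module.End.HasEigenvalue T μ}

/-- `E(Λ)`: the sum of the eigenspaces of `T` corresponding to eigenvalues in `Λ`. -/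
def ESub (T : V →ₗ[ℝ] V) (Λ : Set ℝ) : Submodule ℝ V :=
  ⨆ μ ∈ Λ, Module.End.eigenspace T μ

/-- `C(μ̂, Λ) = max_{ξ ∈ (Spec(T)\Λ) ∪ {0}} ξ / |ξ - μ̂|`. -/
def Cconst (T : V →ₗ[ℝ] V) (Λ : Set ℝ) (μ : ℝ) : ℝ :=
  sSup ((fun ξ => ξ / |ξ - μ|) '' ((specSet T \ Λ) ∪ {0}))

/-- Squared energy norm `‖v‖_B² = B(v,v) = ⟪T v, v⟫`. -/
def enormSq (T : V →ₗ[ℝ] V) (v : V) : ℝ := ⟪T v, v⟫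

/-- Energy norm `‖v‖_B = B(v,v)^{1/2}`. -/
def enorm (T : V →ₗ[ℝ] V) (v : V) : ℝ := Real.sqrt ⟪T v, v⟫

/-- `S`: the orthogonal projection of `V` onto `E(Λ)`, as an endomorphism of `V`. -/
def Sproj [FiniteDimensional ℝ V] (T : V →ₗ[ℝ] V) (Λ : Set ℝ) : V →ₗ[ℝ] V :=
  (ESub T Λ).subtype ∘ₗ (ESub T Λ).orthogonalProjectionOnto.toLinearMap

theorem OrthonormalBasis.norm_le_mul_norm_of_forall_abs_inner_le {ι : Type*} [Fintype ι]
    (b : OrthonormalBasis ι ℝ V) {C : ℝ} (hC : 0 ≤ C) {x y : V}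
    (h : ∀ i, |⟪b i, x⟫| ≤ C * |⟪b i, y⟫|) : ‖x‖ ≤ C * ‖y‖ := by
  refine le_of_sq_le_sq ?_ (by positivity)
  calc ‖x‖ ^ 2 = ∑ i, |⟪b i, x⟫| ^ 2 := by simp_rw [sq_abs, b.sum_sq_inner_right]
    _ ≤ ∑ i, (C * |⟪b i, y⟫|) ^ 2 := by gcongr with i; exact h i
    _ = (C * ‖y‖) ^ 2 := by simp_rw [mul_pow, sq_abs, ← Finset.mul_sum, b.sum_sq_inner_right]

theorem Module.End.HasEigenvalue.pos_of_inner_apply_self_pos {T : V →ₗ[ℝ] V} {ξ : ℝ}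
    (hξ : Module.End.HasEigenvalue T ξ) (hT : ∀ v : V, v ≠ 0 → 0 < ⟪T v, v⟫) : 0 < ξ := by
  obtain ⟨v, hv, hv0⟩ := hξ.exists_hasEigenvector
  have hTv := hT v hv0
  rw [Module.End.mem_eigenspace_iff.mp hv, real_inner_smul_left] at hTv
  exact pos_of_mul_pos_left hTv real_inner_self_nonneg

section Cconst

variable [FiniteDimensional ℝ V] (T : V →ₗ[ℝ] V) (Λ : Set ℝ) (μ : ℝ)

theorem bddAbove_Cconst_set :
    BddAbove ((fun ξ => ξ / |ξ - μ|) '' ((specSet T \ Λ) ∪ {0})) :=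
  (((Module.End.finite_hasEigenvalue T).sdiff.union (Set.finite_singleton 0)).image _).bddAbove

theorem div_abs_sub_le_Cconst {ξ : ℝ} (hξ : ξ ∈ specSet T \ Λ) :
    ξ / |ξ - μ| ≤ Cconst T Λ μ :=
  le_csSup (bddAbove_Cconst_set T Λ μ) ⟨ξ, Or.inl hξ, rfl⟩

theorem Cconst_nonneg : 0 ≤ Cconst T Λ μ := by
  simpa [Cconst] using le_csSup (bddAbove_Cconst_set T Λ μ) ⟨0, Or.inr rfl, rfl⟩

end Cconst

theorem Sproj_apply [FiniteDimensional ℝ V] (T : V →ₗ[ℝ] V) (Λ : Set ℝ) (φ : V) :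
    Sproj T Λ φ = (ESub T Λ).starProjection φ :=
  rfl

theorem inner_sub_Sproj_of_mem_eigenspace_of_mem [FiniteDimensional ℝ V] {T : V →ₗ[ℝ] V}
    {Λ : Set ℝ} {ξ : ℝ} (hξ : ξ ∈ Λ) {v : V} (hv : v ∈ Module.End.eigenspace T ξ) (φ : V) :
    ⟪v, φ - Sproj T Λ φ⟫ = 0 :=
  (Submodule.mem_orthogonal _ _).mp
    (Sproj_apply T Λ φ ▸ (ESub T Λ).sub_starProjection_mem_orthogonal φ) v
    (Submodule.mem_iSup_of_mem ξ (Submodule.mem_iSup_of_mem hξ hv))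

namespace LinearMap.IsSymmetric

variable {T : V →ₗ[ℝ] V} (hT : T.IsSymmetric) {ξ : ℝ} {v : V}
include hT

theorem isOrtho_eigenspace_ESub {Λ : Set ℝ} (hξ : ξ ∉ Λ) :
    Module.End.eigenspace T ξ ⟂ ESub T Λ :=
  Submodule.isOrtho_iSup_right.mpr fun _ => Submodule.isOrtho_iSup_right.mpr fun hν =>
    hT.orthogonalFamily_eigenspaces.isOrtho fun h => hξ (h ▸ hν)

theorem inner_sub_Sproj_of_mem_eigenspace_of_notMem [FiniteDimensional ℝ V] {Λ : Set ℝ}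
    (hξ : ξ ∉ Λ) (hv : v ∈ Module.End.eigenspace T ξ) (φ : V) :
    ⟪v, φ - Sproj T Λ φ⟫ = ⟪v, φ⟫ := by
  rw [inner_sub_right, Sproj_apply, (hT.isOrtho_eigenspace_ESub hξ).inner_eq hv
    ((ESub T Λ).starProjection_apply_mem φ), sub_zero]

theorem inner_apply_rightInverse_of_mem_eigenspace {Tinv : V →ₗ[ℝ] V}
    (hTinv : ∀ w, T (Tinv w) = w) (hξ : ξ ≠ 0) (hv : v ∈ Module.End.eigenspace T ξ) (φ : V) :
    ⟪v, Tinv φ⟫ = ξ⁻¹ * ⟪v, φ⟫ := by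
  rw [eq_inv_mul_iff_mul_eq₀ hξ, ← real_inner_smul_left, ← Module.End.mem_eigenspace_iff.mp hv,
    hT, hTinv]

theorem abs_inner_sub_Sproj_le [FiniteDimensional ℝ V] {Tinv : V →ₗ[ℝ] V}
    (hTinv : ∀ w, T (Tinv w) = w) {Λ : Set ℝ} {μ : ℝ} (hμ : μ ∉ specSet T \ Λ)
    (hξ : Module.End.HasEigenvalue T ξ) (hξpos : 0 < ξ) (hv : v ∈ Module.End.eigenspace T ξ)
    (φ : V) :
    |⟪v, φ - Sproj T Λ φ⟫| ≤ Cconst T Λ μ * |⟪v, φ - μ • Tinv φ⟫| := by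
  by_cases hξΛ : ξ ∈ Λ
  · rw [inner_sub_Sproj_of_mem_eigenspace_of_mem hξΛ hv, abs_zero]
    exact mul_nonneg (Cconst_nonneg T Λ μ) (abs_nonneg _)
  have hξspec : ξ ∈ specSet T \ Λ := ⟨hξ, hξΛ⟩
  have hξμ : ξ - μ ≠ 0 := sub_ne_zero.mpr fun h => hμ (h ▸ hξspec)
  have hcoord : ⟪v, φ - μ • Tinv φ⟫ = (ξ - μ) / ξ * ⟪v, φ⟫ := by
    rw [inner_sub_right, real_inner_smul_right,
      hT.inner_apply_rightInverse_of_mem_eigenspace hTinv hξpos.ne' hv]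
    field_simp
  rw [hT.inner_sub_Sproj_of_mem_eigenspace_of_notMem hξΛ hv, hcoord, abs_mul, abs_div,
    abs_of_pos hξpos, ← mul_assoc]
  calc |⟪v, φ⟫| = ξ / |ξ - μ| * (|ξ - μ| / ξ) * |⟪v, φ⟫| := by
        field_simp [abs_ne_zero.mpr hξμ]
    _ ≤ Cconst T Λ μ * (|ξ - μ| / ξ) * |⟪v, φ⟫| := by
        gcongr
        exact div_abs_sub_le_Cconst T Λ μ hξspec

end LinearMap.IsSymmetric

theorem stmt_6_general [FiniteDimensional ℝ V]
    (T Tinv : V →ₗ[ℝ] V) (hTsymm : T.IsSymmetric)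
    (hTpos : ∀ v : V, v ≠ 0 → 0 < ⟪T v, v⟫)
    (hTinv₁ : ∀ v, T (Tinv v) = v)
    (Λ : Set ℝ)
    (μ : ℝ) (hμ : μ ∉ specSet T \ Λ)
    (φ : V) :
    ‖φ - Sproj T Λ φ‖ ≤ Cconst T Λ μ * ‖φ - μ • Tinv φ‖ := by
  let b := hTsymm.eigenvectorBasis rfl
  refine b.norm_le_mul_norm_of_forall_abs_inner_le (Cconst_nonneg T Λ μ) fun i => ?_
  have hξ := hTsymm.hasEigenvalue_eigenvalues rfl i
  exact hTsymm.abs_inner_sub_Sproj_le hTinv₁ hμ hξ (hξ.pos_of_inner_apply_self_pos hTpos)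
    (hTsymm.hasEigenvector_eigenvectorBasis rfl i).1 φ

/-- estimate (2.3) in the ambient (L²-type) norm:
`‖(I−S)φ̂‖ ≤ C(μ̂,Λ) · ‖φ̂ − μ̂ T⁻¹ φ̂‖`. -/
theorem stmt_6 [FiniteDimensional ℝ V]
    (T Tinv : V →ₗ[ℝ] V) (hTsymm : T.IsSymmetric)
    (hTpos : ∀ v : V, v ≠ 0 → 0 < ⟪T v, v⟫)
    (hTinv₁ : ∀ v, T (Tinv v) = v) (hTinv₂ : ∀ v, Tinv (T v) = v)
    (Λ : Set ℝ) (hΛ : Λ ⊆ specSet T)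
    (μ : ℝ) (hμpos : 0 < μ) (hμ : μ ∉ specSet T \ Λ)
    (φ : V) :
    ‖φ - Sproj T Λ φ‖ ≤ Cconst T Λ μ * ‖φ - μ • Tinv φ‖ :=
  stmt_6_general T Tinv hTsymm hTpos hTinv₁ Λ μ hμ φ
end
end

section
/- Assume Λ is a nonempty subset of Spec(T), let T' = T ∘ (I−S), and let μ̂ > 0 with μ̂ ∉ Spec(T)\Λ. Then μ̂·I − T' is invertible and the operator norm of T' ∘ (μ̂·I − T')⁻¹ (induced by the inner-product norm on V) equals max_{ξ ∈ (Spec(T)\Λ) ∪ {0}} ξ/|ξ−μ̂|. -/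
/-!
In an orthonormal eigenbasis `bᵢ` of `T` (eigenvalues `αᵢ > 0`), `S` fixes the `bᵢ` with
`αᵢ ∈ Λ` and kills the others, so `T'` is diagonal with entries `νᵢ = 0` if `αᵢ ∈ Λ` and
`νᵢ = αᵢ` otherwise. Hence `μ̂ - T'` is diagonal with nonzero entries `μ̂ - νᵢ`, and
`T' (μ̂ - T')⁻¹` is diagonal with entries `νᵢ / (μ̂ - νᵢ)`; the norm of an operator that is
diagonal in an orthonormal basis is the largest modulus of its entries. As `Λ ≠ ∅`, some
`νᵢ` is `0`, so the `νᵢ` run exactly over `(Spec T \ Λ) ∪ {0}`, and `νᵢ ≥ 0` gives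
`|νᵢ / (μ̂ - νᵢ)| = νᵢ / |νᵢ - μ̂|`.
-/

open scoped RealInnerProductSpace

noncomputable section

variable {V : Type*} [NormedAddCommGroup V] [InnerProductSpace ℝ V]

namespace OrthonormalBasis

variable {ι : Type*} [Fintype ι] (b : OrthonormalBasis ι ℝ V) {A : V →ₗ[ℝ] V} {c : ι → ℝ}

theorem repr_apply_of_apply_eq_smul (hA : ∀ i, A (b i) = c i • b i) (v : V) (j : ι) :
    b.repr (A v) j = c j * b.repr v j := by
  classical
  conv_lhs => rw [← b.sum_repr v]
  simp [map_sum, hA, b.repr_self, Pi.single_apply, mul_comm]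

theorem injective_of_apply_eq_smul (hA : ∀ i, A (b i) = c i • b i) (hc : ∀ i, c i ≠ 0) :
    Function.Injective A := by
  refine (injective_iff_map_eq_zero A).mpr fun v hv => b.repr.injective ?_
  ext j
  have := b.repr_apply_of_apply_eq_smul hA v j
  simp_all

theorem norm_toContinuousLinearMap_of_apply_eq_smul [FiniteDimensional ℝ V]
    (hA : ∀ i, A (b i) = c i • b i) : ‖A.toContinuousLinearMap‖ = ⨆ i, |c i| := by
  have hc : ∀ i, |c i| ≤ ⨆ i, |c i| := le_ciSup (Finite.bddAbove_range _)
  have hM : 0 ≤ ⨆ i, |c i| := Real.iSup_nonneg fun i => abs_nonneg _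
  refine le_antisymm (A.toContinuousLinearMap.opNorm_le_bound hM fun v => ?_)
    (Real.iSup_le (fun i => ?_) (norm_nonneg _))
  · rw [← b.repr.norm_map, ← b.repr.norm_map v]
    refine le_of_sq_le_sq ?_ (by positivity)
    rw [mul_pow, EuclideanSpace.norm_sq_eq, EuclideanSpace.norm_sq_eq, Finset.mul_sum]
    refine Finset.sum_le_sum fun j _ => ?_
    rw [LinearMap.coe_toContinuousLinearMap', b.repr_apply_of_apply_eq_smul hA, norm_mul, mul_pow,
      Real.norm_eq_abs]
    gcongr
    exact hc j
  · simpa [hA, norm_smul] using A.toContinuousLinearMap.le_opNorm (b i)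

end OrthonormalBasis

theorem Set.range_diff_union_zero_eq_range_ite {ι β : Type*} [Zero β] {f : ι → β} {s : Set β}
    [DecidablePred (· ∈ s)] (h : (s ∩ Set.range f).Nonempty) :
    (Set.range f \ s) ∪ {0} = Set.range fun i => if f i ∈ s then 0 else f i := by
  obtain ⟨_, hs, i₀, rfl⟩ := h
  ext x
  constructor
  · rintro (⟨⟨i, rfl⟩, hi⟩ | rfl)
    · exact ⟨i, if_neg hi⟩
    · exact ⟨i₀, if_pos hs⟩
  · rintro ⟨i, rfl⟩
    beta_reduce
    split_ifs with hi
    exacts [Or.inr rfl, Or.inl ⟨⟨i, rfl⟩, hi⟩]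

open Module.End

section Spectral

variable {T : V →ₗ[ℝ] V} {Λ : Set ℝ} {ξ : ℝ} {v : V}

theorem specSet_eq_range_eigenvalues [FiniteDimensional ℝ V] (hT : T.IsSymmetric) {n : ℕ}
    (hn : Module.finrank ℝ V = n) : specSet T = Set.range (hT.eigenvalues hn) :=
  Set.ext fun _ => ⟨fun h => hT.exists_eigenvalues_eq hn h,
    by rintro ⟨i, rfl⟩; exact hT.hasEigenvalue_eigenvalues hn i⟩

theorem eigenvalue_pos_of_inner_apply_pos (hTpos : ∀ v : V, v ≠ 0 → 0 < ⟪T v, v⟫)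
    (hξ : HasEigenvalue T ξ) : 0 < ξ := by
  obtain ⟨v, hv, hv0⟩ := hξ.exists_hasEigenvector
  have := hTpos v hv0
  rw [mem_eigenspace_iff.mp hv, real_inner_smul_left, real_inner_self_eq_norm_sq] at this
  exact pos_of_mul_pos_left this (sq_nonneg _)

theorem eigenspace_le_ESub (hξ : ξ ∈ Λ) : eigenspace T ξ ≤ ESub T Λ :=
  le_iSup₂ (f := fun ξ _ => eigenspace T ξ) ξ hξ

theorem eigenspace_le_orthogonal_ESub (hT : T.IsSymmetric) (hξ : ξ ∉ Λ) :
    eigenspace T ξ ≤ (ESub T Λ)ᗮ :=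
  Submodule.IsOrtho.le <| Submodule.isOrtho_iSup_right.mpr fun _ =>
    Submodule.isOrtho_iSup_right.mpr fun hζ =>
      hT.orthogonalFamily_eigenspaces.isOrtho fun h => hξ (h ▸ hζ)

theorem Sproj_apply_of_mem_eigenspace [FiniteDimensional ℝ V] (hT : T.IsSymmetric)
    [Decidable (ξ ∈ Λ)] (hv : v ∈ eigenspace T ξ) :
    Sproj T Λ v = if ξ ∈ Λ then v else 0 := by
  split_ifs with hξ
  · exact Submodule.starProjection_eq_self_iff.mpr (eigenspace_le_ESub hξ hv)
  · simp [Sproj, Submodule.orthogonalProjectionOnto_apply_of_mem_orthogonal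
      (eigenspace_le_orthogonal_ESub hT hξ hv)]

theorem apply_sub_Sproj_of_mem_eigenspace [FiniteDimensional ℝ V] (hT : T.IsSymmetric)
    [Decidable (ξ ∈ Λ)] (hv : v ∈ eigenspace T ξ) :
    T (v - Sproj T Λ v) = (if ξ ∈ Λ then 0 else ξ) • v := by
  rw [Sproj_apply_of_mem_eigenspace hT hv]
  split_ifs <;> simp [mem_eigenspace_iff.mp hv]

end Spectral

/-- constant formula (2.4): for nonempty `Λ ⊆ Spec(T)`,
`T' = T ∘ (I−S)` and `μ̂ > 0` with `μ̂ ∉ Spec(T)\Λ`, the operator `μ̂·I − T'` is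
invertible and `‖T' ∘ (μ̂·I − T')⁻¹‖ = max_{ξ ∈ (Spec(T)\Λ) ∪ {0}} ξ/|ξ−μ̂|`. -/
theorem stmt_9 [FiniteDimensional ℝ V]
    (T : V →ₗ[ℝ] V) (hTsymm : T.IsSymmetric)
    (hTpos : ∀ v : V, v ≠ 0 → 0 < ⟪T v, v⟫)
    (Λ : Set ℝ) (hΛ : Λ ⊆ specSet T) (hΛne : Λ.Nonempty)
    (T' : V →ₗ[ℝ] V) (hT' : T' = T ∘ₗ (LinearMap.id - Sproj T Λ))
    (μ : ℝ) (hμpos : 0 < μ) (hμ : μ ∉ specSet T \ Λ) :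
    Function.Bijective (μ • (LinearMap.id : V →ₗ[ℝ] V) - T') ∧
      ∀ e : V ≃ₗ[ℝ] V, (e : V →ₗ[ℝ] V) = μ • (LinearMap.id : V →ₗ[ℝ] V) - T' →
        ‖LinearMap.toContinuousLinearMap (T' ∘ₗ (e.symm : V →ₗ[ℝ] V))‖
          = sSup ((fun ξ => ξ / |ξ - μ|) '' ((specSet T \ Λ) ∪ {0})) := by
  classical
  set b := hTsymm.eigenvectorBasis rfl
  set α := hTsymm.eigenvalues rfl
  set ν := fun i => if α i ∈ Λ then 0 else α i
  have hspec : specSet T = Set.range α := specSet_eq_range_eigenvalues hTsymm rfl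
  have hT'b : ∀ i, T' (b i) = ν i • b i := fun i =>
    hT' ▸ apply_sub_Sproj_of_mem_eigenspace hTsymm (hTsymm.hasEigenvector_eigenvectorBasis rfl i).1
  have hν_nonneg : ∀ i, 0 ≤ ν i := fun i => by
    have := eigenvalue_pos_of_inner_apply_pos hTpos (hTsymm.hasEigenvalue_eigenvalues rfl i)
    dsimp only [ν]; split_ifs <;> positivity
  have hμν : ∀ i, μ - ν i ≠ 0 := fun i => by
    dsimp only [ν]
    split_ifs with hi
    · simpa using hμpos.ne'
    · exact sub_ne_zero.mpr fun h => hμ ⟨hspec ▸ h ▸ Set.mem_range_self i, h ▸ hi⟩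
  have hBb : ∀ i, (μ • (LinearMap.id : V →ₗ[ℝ] V) - T') (b i) = (μ - ν i) • b i := fun i => by
    simp [hT'b, sub_smul]
  have hB_inj := b.injective_of_apply_eq_smul hBb hμν
  refine ⟨⟨hB_inj, LinearMap.surjective_of_injective hB_inj⟩, fun e he => ?_⟩
  have hAb : ∀ i, (T' ∘ₗ e.symm) (b i) = (ν i / (μ - ν i)) • b i := fun i => by
    have he_symm : e.symm (b i) = (μ - ν i)⁻¹ • b i := e.symm_apply_eq.mpr <| by
      rw [map_smul, ← LinearEquiv.coe_coe, he, hBb, smul_smul, inv_mul_cancel₀ (hμν i), one_smul]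
    rw [LinearMap.comp_apply, LinearEquiv.coe_coe, he_symm, map_smul, hT'b, smul_smul,
      div_eq_inv_mul]
  obtain ⟨ξ, hξ⟩ := hΛne
  rw [b.norm_toContinuousLinearMap_of_apply_eq_smul hAb, hspec,
    Set.range_diff_union_zero_eq_range_ite (hspec ▸ ⟨ξ, hξ, hΛ hξ⟩), ← Set.range_comp]
  congr 1; ext i
  change _ = ν i / |ν i - μ|
  rw [abs_div, abs_of_nonneg (hν_nonneg i), abs_sub_comm]
end
end
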